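/- Let W ∈ B(Y,X) be nonzero and let A ∈ B(X,Y) be Wg-Drazin invertible. Then: (i) AWA^{⊗,W}W is an idempotent with range R(A^{d,W}) and kernel N(A^{ⓓ,W}WAW); (ii) WAWA^{⊗,W} is an idempotent with range R(WA^{d,W}) and kernel N(A^{ⓓ,W}WA); (iii) A^{⊗,W}WAW is an idempotent with range R(A^{d,W}) and kernel N(A^{ⓓ,W}W(AW)²); (iv) WA^{⊗,W}WA is an idempotent with range R(WA^{d,W}) and kernel N(A^{ⓓ,W}(WA)²). -/

import Mathlib

open ContinuousLinearMap
open Filter Topology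
open scoped ENNReal NNReal

variable {X Y : Type*}
  [NormedAddCommGroup X] [InnerProductSpace ℂ X] [CompleteSpace X]
  [NormedAddCommGroup Y] [InnerProductSpace ℂ Y] [CompleteSpace Y]

/-- An operator is quasinilpotent if its spectrum equals `{0}`. -/
def IsQuasinilpotent (T : X →L[ℂ] X) : Prop := spectrum ℂ T = {0}

/-- `B` is the generalized Drazin inverse of `A`. -/
def IsGDrazinInv (A B : X →L[ℂ] X) : Prop :=
  A * B = B * A ∧ B * A * B = B ∧ IsQuasinilpotent (A - A * A * B)

/-- `B` is the Wg-Drazin inverse of `A` (relative to the weight `W`); quasinilpotence of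
`A - AWBWA ∈ B(X,Y)` is taken relative to `W`, i.e. `W(A - AWBWA)` is quasinilpotent. -/
def IsWgDrazinInv (W : Y →L[ℂ] X) (A B : X →L[ℂ] Y) : Prop :=
  A ∘L W ∘L B = B ∘L W ∘L A ∧
  B ∘L W ∘L A ∘L W ∘L B = B ∧
  IsQuasinilpotent (W ∘L (A - A ∘L W ∘L B ∘L W ∘L A))

/-- `P` is the orthogonal projection of the space onto the subspace `S`. -/
def IsOrthoProjOnto (P : X →L[ℂ] X) (S : Submodule ℂ X) : Prop :=
  P * P = P ∧ ContinuousLinearMap.adjoint P = P ∧ LinearMap.range (P).toLinearMap = S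

/-- `P` is the idempotent with range `L` and kernel `M` (i.e. `P = P_{L,M}`). -/
def IsIdempotentOnAlong (P : X →L[ℂ] X) (L M : Submodule ℂ X) : Prop :=
  P * P = P ∧ LinearMap.range (P).toLinearMap = L ∧ LinearMap.ker (P).toLinearMap = M

/-- Given the generalized Drazin inverse `Ad` of `A`, `B` is the core-EP inverse of `A`:
`AB` is the orthogonal projection onto `R(A^d)` and `R(B) ⊆ R(A^d)`. -/
def IsCoreEPInv (A Ad B : X →L[ℂ] X) : Prop :=
  IsOrthoProjOnto (A * B) (LinearMap.range (Ad).toLinearMap) ∧ LinearMap.range (B).toLinearMap ≤ LinearMap.range (Ad).toLinearMap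

/-- Given the generalized Drazin inverses `WAd` of `WA` and `AWd` of `AW`, `B` is the
weighted core-EP inverse of `A`: `WAWB` is the orthogonal projection onto `R((WA)^d)`
and `R(B) ⊆ R((AW)^d)`. -/
def IsWCoreEPInv (W : Y →L[ℂ] X) (A : X →L[ℂ] Y) (WAd : X →L[ℂ] X) (AWd : Y →L[ℂ] Y)
    (B : X →L[ℂ] Y) : Prop :=
  IsOrthoProjOnto (W ∘L A ∘L W ∘L B) (LinearMap.range (WAd).toLinearMap) ∧
  LinearMap.range (B).toLinearMap ≤ LinearMap.range (AWd).toLinearMap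

/-- `B` is the group inverse of `A`. -/
def IsGroupInv (A B : X →L[ℂ] X) : Prop :=
  A * B = B * A ∧ B * A * B = B ∧ A * B * A = A

/-- `S` is the Moore-Penrose inverse of `T`. -/
def IsMPInv (T : Y →L[ℂ] X) (S : X →L[ℂ] Y) : Prop :=
  T ∘L S ∘L T = T ∧ S ∘L T ∘L S = S ∧
  ContinuousLinearMap.adjoint (T ∘L S) = T ∘L S ∧
  ContinuousLinearMap.adjoint (S ∘L T) = S ∘L T

/-- `C` is the core inverse of `T`: `TC` is the orthogonal projection onto `R(T)`
and `R(C) ⊆ R(T)`. -/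
def IsCoreInv (T C : X →L[ℂ] X) : Prop :=
  IsOrthoProjOnto (T * C) (LinearMap.range (T).toLinearMap) ∧ LinearMap.range (C).toLinearMap ≤ LinearMap.range (T).toLinearMap

set_option linter.unusedSectionVars false

lemma qn_vanish {A' : Type*} [NormedRing A'] [NormedAlgebra ℂ A'] [CompleteSpace A']
    (Q : A') (hQ : spectrum ℂ Q = {0}) (c : ℝ≥0) (x : A')
    (hx : ∀ n : ℕ, (‖x‖₊ : ℝ≥0∞) ≤ (c : ℝ≥0∞) ^ (n+1) * (‖Q ^ (n+1)‖₊ : ℝ≥0∞)) : x = 0 := by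
  have hrad : spectralRadius ℂ Q = 0 := by
    rw [spectralRadius, hQ]
    simp
  have hG := spectrum.pow_nnnorm_pow_one_div_tendsto_nhds_spectralRadius Q
  rw [hrad] at hG
  set δ : ℝ≥0∞ := (2 * ((c : ℝ≥0∞) + 1))⁻¹ with hδ
  have hδpos : 0 < δ := by
    apply ENNReal.inv_pos.2
    exact ENNReal.mul_ne_top (by norm_num) (by simp)
  have hev : ∀ᶠ n : ℕ in atTop, (‖Q ^ n‖₊ : ℝ≥0∞) ^ (1 / n : ℝ) < δ :=
    hG.eventually_lt_const hδpos
  have key : ∀ᶠ n : ℕ in atTop, (‖x‖₊ : ℝ≥0∞) ≤ 2⁻¹ ^ n := by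
    filter_upwards [hev, eventually_ge_atTop 1] with n hn hn1
    have hne : (n:ℝ) ≠ 0 := Nat.cast_ne_zero.2 (Nat.one_le_iff_ne_zero.mp hn1)
    have hQn : (‖Q ^ n‖₊ : ℝ≥0∞) ≤ δ ^ n := by
      calc (‖Q ^ n‖₊ : ℝ≥0∞) = ((‖Q ^ n‖₊ : ℝ≥0∞) ^ (1/(n:ℝ))) ^ (n:ℝ) := by
            rw [← ENNReal.rpow_mul, one_div, inv_mul_cancel₀ hne, ENNReal.rpow_one]
        _ ≤ δ ^ (n:ℝ) := ENNReal.rpow_le_rpow hn.le (by positivity)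
        _ = δ ^ n := ENNReal.rpow_natCast δ n
    obtain ⟨m, rfl⟩ : ∃ m, n = m + 1 := ⟨n - 1, (Nat.succ_pred_eq_of_pos hn1).symm⟩
    calc (‖x‖₊ : ℝ≥0∞) ≤ (c : ℝ≥0∞) ^ (m+1) * (‖Q ^ (m+1)‖₊ : ℝ≥0∞) := hx m
      _ ≤ (c : ℝ≥0∞) ^ (m+1) * δ ^ (m+1) := by gcongr
      _ = ((c : ℝ≥0∞) * δ) ^ (m+1) := (mul_pow _ _ _).symm
      _ ≤ (((c : ℝ≥0∞) + 1) * δ) ^ (m+1) := by gcongr; exact le_self_add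
      _ ≤ (2⁻¹ : ℝ≥0∞) ^ (m+1) := by
          gcongr
          rw [hδ, ENNReal.mul_inv (by norm_num) (by simp), ← mul_assoc]
          calc ((c : ℝ≥0∞) + 1) * 2⁻¹ * ((c:ℝ≥0∞)+1)⁻¹
              = (((c:ℝ≥0∞)+1) * ((c:ℝ≥0∞)+1)⁻¹) * 2⁻¹ := by ring
            _ ≤ 1 * 2⁻¹ := by gcongr; exact ENNReal.mul_inv_le_one _
            _ = 2⁻¹ := one_mul _
  have hlim : Tendsto (fun n : ℕ => (2⁻¹ : ℝ≥0∞) ^ n) atTop (𝓝 0) :=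
    ENNReal.tendsto_pow_atTop_nhds_zero_of_lt_one (by norm_num)
  have : (‖x‖₊ : ℝ≥0∞) ≤ 0 := ge_of_tendsto hlim key
  simpa using this

lemma gd_aux {A' : Type*} [NormedRing A'] [NormedAlgebra ℂ A'] [CompleteSpace A']
    (a b₁ b₂ : A') (c₁ : a * b₁ = b₁ * a) (o₁ : b₁ * a * b₁ = b₁)
    (c₂ : a * b₂ = b₂ * a) (o₂ : b₂ * a * b₂ = b₂)
    (q₂ : spectrum ℂ (a - a * a * b₂) = {0}) :
    (a * b₁) * (1 - a * b₂) = 0 ∧ (1 - a * b₂) * (a * b₁) = 0 := by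
  have hC₁ : Commute a b₁ := c₁
  have hC₂ : Commute a b₂ := c₂
  have hp : IsIdempotentElem (a * b₁) := by
    unfold IsIdempotentElem
    rw [mul_assoc a b₁ (a * b₁), ← mul_assoc b₁ a b₁, o₁]
  have hq : IsIdempotentElem (a * b₂) := by
    unfold IsIdempotentElem
    rw [mul_assoc a b₂ (a * b₂), ← mul_assoc b₂ a b₂, o₂]
  have hq1 : IsIdempotentElem (1 - a * b₂) := hq.one_sub
  have hCq : Commute a (1 - a * b₂) := ((Commute.one_right a).sub_right ((Commute.refl a).mul_right hC₂))
  have hQeq : a - a * a * b₂ = a * (1 - a * b₂) := by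
    rw [mul_sub, mul_one, ← mul_assoc]
  set Q := a * (1 - a * b₂) with hQdef
  rw [hQeq] at q₂
  -- key power identities
  have hpow : ∀ n : ℕ, Q ^ (n+1) = a ^ (n+1) * (1 - a * b₂) := by
    intro n
    rw [hQdef, hCq.mul_pow, hq1.pow_succ_eq]
  have hppow : ∀ n : ℕ, a ^ (n+1) * b₁ ^ (n+1) = a * b₁ := by
    intro n
    rw [← hC₁.mul_pow, hp.pow_succ_eq]
  have hppow' : ∀ n : ℕ, b₁ ^ (n+1) * a ^ (n+1) = a * b₁ := by
    intro n
    rw [← hC₁.symm.mul_pow, ← c₁, hp.pow_succ_eq]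
  constructor
  · apply qn_vanish Q q₂ ‖b₁‖₊
    intro n
    have : (a * b₁) * (1 - a * b₂) = b₁ ^ (n+1) * Q ^ (n+1) := by
      rw [hpow, ← hppow' n, mul_assoc]
    rw [this]
    calc (‖b₁ ^ (n+1) * Q ^ (n+1)‖₊ : ℝ≥0∞) ≤ (‖b₁ ^ (n+1)‖₊ : ℝ≥0∞) * ‖Q ^ (n+1)‖₊ := by
          exact_mod_cast nnnorm_mul_le _ _
      _ ≤ (‖b₁‖₊ : ℝ≥0∞) ^ (n+1) * ‖Q ^ (n+1)‖₊ := by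
          gcongr
          exact_mod_cast nnnorm_pow_le' b₁ n.succ_pos
  · apply qn_vanish Q q₂ ‖b₁‖₊
    intro n
    have hcomm : (1 - a * b₂) * a ^ (n+1) = a ^ (n+1) * (1 - a * b₂) :=
      (hCq.pow_left (n+1)).symm.eq.symm ▸ ((hCq.pow_left (n+1)).eq).symm
    have : (1 - a * b₂) * (a * b₁) = Q ^ (n+1) * b₁ ^ (n+1) := by
      rw [hpow, ← hppow n, ← mul_assoc, hcomm]
    rw [this]
    calc (‖Q ^ (n+1) * b₁ ^ (n+1)‖₊ : ℝ≥0∞) ≤ (‖Q ^ (n+1)‖₊ : ℝ≥0∞) * ‖b₁ ^ (n+1)‖₊ := by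
          exact_mod_cast nnnorm_mul_le _ _
      _ ≤ (‖Q ^ (n+1)‖₊ : ℝ≥0∞) * (‖b₁‖₊ : ℝ≥0∞) ^ (n+1) := by
          gcongr
          exact_mod_cast nnnorm_pow_le' b₁ n.succ_pos
      _ = (‖b₁‖₊ : ℝ≥0∞) ^ (n+1) * ‖Q ^ (n+1)‖₊ := mul_comm _ _

lemma gd_unique {A' : Type*} [NormedRing A'] [NormedAlgebra ℂ A'] [CompleteSpace A']
    (a b₁ b₂ : A') (c₁ : a * b₁ = b₁ * a) (o₁ : b₁ * a * b₁ = b₁)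
    (q₁ : spectrum ℂ (a - a * a * b₁) = {0})
    (c₂ : a * b₂ = b₂ * a) (o₂ : b₂ * a * b₂ = b₂)
    (q₂ : spectrum ℂ (a - a * a * b₂) = {0}) : b₁ = b₂ := by
  obtain ⟨e₁, -⟩ := gd_aux a b₁ b₂ c₁ o₁ c₂ o₂ q₂
  obtain ⟨-, e₄⟩ := gd_aux a b₂ b₁ c₂ o₂ c₁ o₁ q₁
  -- e₁ : (a*b₁) * (1 - a*b₂) = 0  →  a*b₁ = (a*b₁)*(a*b₂)
  have h₁ : a * b₁ = (a * b₁) * (a * b₂) := by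
    rw [mul_sub, mul_one] at e₁
    exact sub_eq_zero.mp e₁
  -- e₄ : (1 - a*b₁) * (a*b₂) = 0 → a*b₂ = (a*b₁)*(a*b₂)
  have h₂ : a * b₂ = (a * b₁) * (a * b₂) := by
    rw [sub_mul, one_mul] at e₄
    exact (sub_eq_zero.mp e₄)
  have hpq : a * b₁ = a * b₂ := h₁.trans h₂.symm
  calc b₁ = b₁ * a * b₁ := o₁.symm
    _ = b₁ * (a * b₁) := by rw [mul_assoc]
    _ = b₁ * (a * b₂) := by rw [hpq]
    _ = (b₁ * a) * b₂ := by rw [mul_assoc]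
    _ = (a * b₁) * b₂ := by rw [c₁]
    _ = (a * b₂) * b₂ := by rw [hpq]
    _ = (b₂ * a) * b₂ := by rw [c₂]
    _ = b₂ := o₂

lemma swap_quasinilpotent [Nontrivial Y] (S : X →L[ℂ] Y) (T : Y →L[ℂ] X)
    (h : spectrum ℂ (T ∘L S) = {0}) : spectrum ℂ (S ∘L T) = {0} := by
  have hsub : spectrum ℂ (S ∘L T) ⊆ {0} := by
    intro z hz
    by_contra hz0
    have hz0' : z ≠ 0 := hz0
    have hzT : IsUnit (algebraMap ℂ (X →L[ℂ] X) z - T ∘L S) := by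
      by_contra hc
      have : z ∈ spectrum ℂ (T ∘L S) := hc
      rw [h] at this
      exact hz0' this
    obtain ⟨u, hu⟩ := hzT
    have hu1 : (algebraMap ℂ (X →L[ℂ] X) z - T ∘L S) * ↑u⁻¹ = 1 := by
      rw [← hu]; exact u.mul_inv
    have hu2 : (↑u⁻¹ : X →L[ℂ] X) * (algebraMap ℂ (X →L[ℂ] X) z - T ∘L S) = 1 := by
      rw [← hu]; exact u.inv_mul
    set v : X →L[ℂ] X := ↑u⁻¹ with hv
    have hu1p : ∀ x : X, z • (v x) - T (S (v x)) = x := by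
      intro x
      have := ContinuousLinearMap.ext_iff.mp hu1 x
      simpa [mul_apply, sub_apply, Algebra.algebraMap_eq_smul_one, comp_apply,
        smul_apply, one_apply] using this
    have hu2p : ∀ x : X, v (z • x - T (S x)) = x := by
      intro x
      have := ContinuousLinearMap.ext_iff.mp hu2 x
      simpa [mul_apply, sub_apply, Algebra.algebraMap_eq_smul_one, comp_apply,
        smul_apply, one_apply] using this
    set w : Y →L[ℂ] Y := z⁻¹ • ((1 : Y →L[ℂ] Y) + S ∘L v ∘L T) with hw
    have h1 : (algebraMap ℂ (Y →L[ℂ] Y) z - S ∘L T) * w = 1 := by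
      ext y
      simp only [hw, mul_apply_eq_comp, _root_.sub_apply, Algebra.algebraMap_eq_smul_one, comp_apply,
        _root_.smul_apply, one_apply_eq_self, _root_.add_apply, map_add, map_smul]
      have hTS : T (S (v (T y))) = z • v (T y) - T y := by
        have h' := hu1p (T y)
        rw [sub_eq_iff_eq_add] at h'
        rw [eq_sub_iff_add_eq, h']
        abel
      rw [hTS]
      simp only [map_sub, map_smul, smul_sub, smul_add, smul_smul,
        inv_mul_cancel₀ hz0', one_smul]
      abel
    have h2 : w * (algebraMap ℂ (Y →L[ℂ] Y) z - S ∘L T) = 1 := by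
      ext y
      simp only [hw, mul_apply_eq_comp, _root_.sub_apply, Algebra.algebraMap_eq_smul_one, comp_apply,
        _root_.smul_apply, one_apply_eq_self, _root_.add_apply, map_add, map_smul]
      rw [map_sub T, map_smul T, hu2p (T y)]
      simp only [smul_sub, smul_add, smul_smul, inv_mul_cancel₀ hz0', one_smul]
      abel
    have : IsUnit (algebraMap ℂ (Y →L[ℂ] Y) z - S ∘L T) :=
      ⟨⟨algebraMap ℂ (Y →L[ℂ] Y) z - S ∘L T, w, h1, h2⟩, rfl⟩
    exact (spectrum.mem_iff.mp hz) this
  have hne : (spectrum ℂ (S ∘L T)).Nonempty := spectrum.nonempty _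
  apply Set.Subset.antisymm hsub
  obtain ⟨z, hz⟩ := hne
  have hz0 : z = 0 := hsub hz
  intro t ht
  rw [Set.mem_singleton_iff] at ht
  rw [ht, ← hz0]
  exact hz

theorem stmt4
    (W : Y →L[ℂ] X) (hW : W ≠ 0)
    (A Adw : X →L[ℂ] Y) (hAdw : IsWgDrazinInv W A Adw)
    (WAd : X →L[ℂ] X) (hWAd : IsGDrazinInv (W ∘L A) WAd)
    (AWd : Y →L[ℂ] Y) (hAWd : IsGDrazinInv (A ∘L W) AWd)
    (Ace : X →L[ℂ] Y) (hAce : IsWCoreEPInv W A WAd AWd Ace)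
    (Aot : X →L[ℂ] Y) (hAot : Aot = Ace ∘L W ∘L Ace ∘L W ∘L A) :
    IsIdempotentOnAlong (A ∘L W ∘L Aot ∘L W) (LinearMap.range (Adw).toLinearMap)
      (LinearMap.ker (Ace ∘L W ∘L A ∘L W).toLinearMap) ∧
    IsIdempotentOnAlong (W ∘L A ∘L W ∘L Aot) (LinearMap.range (W ∘L Adw).toLinearMap)
      (LinearMap.ker (Ace ∘L W ∘L A).toLinearMap) ∧
    IsIdempotentOnAlong (Aot ∘L W ∘L A ∘L W) (LinearMap.range (Adw).toLinearMap)
      (LinearMap.ker (Ace ∘L W ∘L A ∘L W ∘L A ∘L W).toLinearMap) ∧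
    IsIdempotentOnAlong (W ∘L Aot ∘L W ∘L A) (LinearMap.range (W ∘L Adw).toLinearMap)
      (LinearMap.ker (Ace ∘L W ∘L A ∘L W ∘L A).toLinearMap) := by
  subst hAot
  obtain ⟨hAdw1, hAdw2, hAdw3⟩ := hAdw
  -- Y is nontrivial
  haveI : Nontrivial Y := by
    by_contra hnt
    rw [not_nontrivial_iff_subsingleton] at hnt
    exact hW (by ext y; simp [Subsingleton.elim y (0 : Y)])
  -- pointwise versions of the Wg-Drazin axioms
  have h1p : ∀ x, A (W (Adw x)) = Adw (W (A x)) := by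
    intro x
    have := ContinuousLinearMap.ext_iff.mp hAdw1 x
    simpa only [coe_coe, coe_comp', Function.comp_apply] using this
  have h2p : ∀ x, Adw (W (A (W (Adw x)))) = Adw x := by
    intro x
    have := ContinuousLinearMap.ext_iff.mp hAdw2 x
    simpa only [coe_coe, coe_comp', Function.comp_apply] using this
  -- W ∘L Adw is the gDrazin inverse of W ∘L A
  have hfa : WAd = W ∘L Adw := by
    refine gd_unique (W ∘L A) WAd (W ∘L Adw) hWAd.1 hWAd.2.1 hWAd.2.2 ?_ ?_ ?_
    · ext x
      simp only [mul_apply_eq_comp, coe_coe, coe_comp', Function.comp_apply]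
      exact congrArg W (h1p x)
    · ext x
      simp only [mul_apply_eq_comp, coe_coe, coe_comp', Function.comp_apply]
      exact congrArg W (h2p x)
    · have heq : (W ∘L A) - (W ∘L A) * (W ∘L A) * (W ∘L Adw)
          = W ∘L (A - A ∘L W ∘L Adw ∘L W ∘L A) := by
        ext x
        simp only [mul_apply_eq_comp, coe_coe, coe_comp', Function.comp_apply, sub_apply, map_sub]
        rw [h1p]
      rw [heq]
      exact hAdw3
  -- Adw ∘L W is the gDrazin inverse of A ∘L W
  have hea : AWd = Adw ∘L W := by
    refine gd_unique (A ∘L W) AWd (Adw ∘L W) hAWd.1 hAWd.2.1 hAWd.2.2 ?_ ?_ ?_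
    · ext x
      simp only [mul_apply_eq_comp, coe_coe, coe_comp', Function.comp_apply]
      exact h1p (W x)
    · ext x
      simp only [mul_apply_eq_comp, coe_coe, coe_comp', Function.comp_apply]
      exact h2p (W x)
    · have heq : (A ∘L W) - (A ∘L W) * (A ∘L W) * (Adw ∘L W)
          = (A - A ∘L W ∘L Adw ∘L W ∘L A) ∘L W := by
        ext x
        simp only [mul_apply_eq_comp, coe_coe, coe_comp', Function.comp_apply, sub_apply, map_sub]
        rw [h1p]
      rw [heq]
      exact swap_quasinilpotent _ W hAdw3
  obtain ⟨⟨hPidem, -, hPrange⟩, hbrange⟩ := hAce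
  rw [hfa] at hPrange
  rw [hea] at hbrange
  -- pointwise core-EP facts
  have hPPp : ∀ x, W (A (W (Ace (W (A (W (Ace x))))))) = W (A (W (Ace x))) := by
    intro x
    have := ContinuousLinearMap.ext_iff.mp hPidem x
    simpa only [mul_apply_eq_comp, coe_coe, coe_comp', Function.comp_apply] using this
  have hD2 : ∀ x, Adw (W (A (W (Ace x)))) = Ace x := by
    intro x
    obtain ⟨y, hy⟩ := hbrange ⟨x, rfl⟩
    have hy' : Adw (W y) = Ace x := by
      simpa only [coe_coe, coe_comp', Function.comp_apply] using hy
    rw [← hy']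
    exact h2p (W y)
  have hPf : ∀ x, W (A (W (Ace (W (Adw x))))) = W (Adw x) := by
    intro x
    have hm : W (Adw x) ∈ LinearMap.range ((W ∘L A ∘L W ∘L Ace : X →L[ℂ] X)).toLinearMap := by
      rw [hPrange]
      exact ⟨x, by simp only [coe_coe, coe_comp', Function.comp_apply]⟩
    obtain ⟨y, hy⟩ := hm
    have hy' : W (A (W (Ace y))) = W (Adw x) := by
      simpa only [coe_coe, coe_comp', Function.comp_apply] using hy
    rw [← hy']
    exact hPPp y
  -- derived pointwise identities
  have hsf : ∀ x, W (A (W (Adw x))) = W (Adw (W (A x))) := fun x => congrArg W (h1p x)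
  have hbf : ∀ t, Ace (W (Adw t)) = Adw (W (Adw t)) := by
    intro t
    conv_lhs => rw [← hD2 (W (Adw t))]
    rw [hPf]
  have hD6 : ∀ x, A (W (Adw (W (Adw x)))) = Adw x := by
    intro x
    rw [h1p, h2p]
  have e0 : ∀ x, A (W (Ace (W (Ace x)))) = Ace x := by
    intro x
    conv_lhs => rw [← hD2 x]
    rw [hbf, hD6, hD2]
  have hbP : ∀ x, Ace (W (A (W (Ace x)))) = Ace x := by
    intro x
    conv_lhs => rw [← hD2 (W (A (W (Ace x))))]
    rw [hPPp, hD2]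
  have e2 : ∀ x, Ace (W (A (W (Adw x)))) = Adw x := by
    intro x
    rw [hsf, hbf, ← hsf, h2p]
  clear hPidem hPrange hbrange hAdw1 hAdw2 hAdw3 hWAd hAWd hfa hea hW
  refine ⟨⟨?_, ?_, ?_⟩, ⟨?_, ?_, ?_⟩, ⟨?_, ?_, ?_⟩, ⟨?_, ?_, ?_⟩⟩
  -- (i) idempotent
  · ext y
    simp only [mul_apply_eq_comp, coe_coe, coe_comp', Function.comp_apply]
    simp only [e0, hbP]
  -- (i) range
  · ext y
    simp only [LinearMap.mem_range, coe_coe, coe_comp', Function.comp_apply]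
    constructor
    · rintro ⟨t, rfl⟩
      rw [e0]
      exact ⟨W (A (W (Ace (W (A (W t)))))), hD2 _⟩
    · rintro ⟨t, rfl⟩
      refine ⟨Adw t, ?_⟩
      rw [e0]
      exact e2 t
  -- (i) kernel
  · have red1 : (A ∘L W ∘L (Ace ∘L W ∘L Ace ∘L W ∘L A) ∘L W) = Ace ∘L W ∘L A ∘L W := by
      ext y
      simp only [coe_coe, coe_comp', Function.comp_apply]
      exact e0 (W (A (W y)))
    rw [red1]
  -- (ii) idempotent
  · ext x
    simp only [mul_apply_eq_comp, coe_coe, coe_comp', Function.comp_apply]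
    simp only [e0, hbP]
  -- (ii) range
  · ext x
    simp only [LinearMap.mem_range, coe_coe, coe_comp', Function.comp_apply]
    constructor
    · rintro ⟨t, rfl⟩
      rw [e0]
      exact ⟨W (A (W (Ace (W (A t))))), congrArg W (hD2 _)⟩
    · rintro ⟨t, rfl⟩
      refine ⟨W (Adw t), ?_⟩
      rw [e0, e2]
  -- (ii) kernel
  · ext x
    simp only [LinearMap.mem_ker, coe_coe, coe_comp', Function.comp_apply]
    constructor
    · intro h
      rw [e0] at h
      rw [← hD2 (W (A x)), h]
      simp
    · intro h
      rw [e0, h, map_zero]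
  -- (iii) idempotent
  · ext y
    simp only [mul_apply_eq_comp, coe_coe, coe_comp', Function.comp_apply]
    simp only [e0, hbP]
  -- (iii) range
  · ext y
    simp only [LinearMap.mem_range, coe_coe, coe_comp', Function.comp_apply]
    constructor
    · rintro ⟨t, rfl⟩
      exact ⟨W (A (W (Ace (W (Ace (W (A (W (A (W t)))))))))), hD2 _⟩
    · rintro ⟨t, rfl⟩
      refine ⟨Adw t, ?_⟩
      rw [hsf, e2, hbf, ← hsf, h2p]
  -- (iii) kernel
  · ext y
    simp only [LinearMap.mem_ker, coe_coe, coe_comp', Function.comp_apply]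
    constructor
    · intro h
      rw [← e0 (W (A (W (A (W y))))), h]
      simp
    · intro h
      rw [h]
      simp
  -- (iv) idempotent
  · ext x
    simp only [mul_apply_eq_comp, coe_coe, coe_comp', Function.comp_apply]
    simp only [e0, hbP]
  -- (iv) range
  · ext x
    simp only [LinearMap.mem_range, coe_coe, coe_comp', Function.comp_apply]
    constructor
    · rintro ⟨t, rfl⟩
      exact ⟨W (A (W (Ace (W (Ace (W (A (W (A t))))))))), congrArg W (hD2 _)⟩
    · rintro ⟨t, rfl⟩
      refine ⟨W (Adw t), ?_⟩
      rw [hsf, e2, hbf, ← hsf, h2p]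
  -- (iv) kernel
  · ext x
    simp only [LinearMap.mem_ker, coe_coe, coe_comp', Function.comp_apply]
    constructor
    · intro h
      rw [← e0 (W (A (W (A x)))), h]
      simp
    · intro h
      rw [h]
      simp
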